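/- Let P be an integer polymatroid on ground set E. Define the corank-nullity polynomial T̃_P(u,v) = Σ_{c∈Z^E} u^{d₁^>(P,c)} v^{d₁^<(P,c)} and, for a linear order < on E, the activity polynomial T_P(x,y) = Σ_{b∈P} x^{oi(b)} y^{oe(b)} (x+y−1)^{ie(b)}. Then T̃_P(u,v) = T_P(1/(1−u), 1/(1−v)) as formal power series; in particular T_P(x,y) does not depend on the chosen order <. -/

import Mathlib

variable {E : Type*} [Fintype E] [DecidableEq E]

/-- `P ⊂ ℤ^E` is (the set of bases of) an integer polymatroid: a nonempty finite set
satisfying the exchange axiom. -/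
def IsPolymatroid (P : Set (E → ℤ)) : Prop :=
  P.Nonempty ∧ P.Finite ∧
    ∀ b ∈ P, ∀ b' ∈ P, ∀ e : E, b e < b' e →
      ∃ f : E, b' f < b f ∧
        (fun x => b x + (if x = e then 1 else 0) - (if x = f then 1 else 0)) ∈ P ∧
        (fun x => b' x - (if x = e then 1 else 0) + (if x = f then 1 else 0)) ∈ P

/-- Manhattan distance `d₁(b,c) = Σ_e |b e − c e|`. -/
def d1 (b c : E → ℤ) : ℕ := ∑ x : E, (b x - c x).natAbs

/-- One-sided deviation `d₁^<(b,c) = Σ_e max(0, c e − b e)` (the corank of `c`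
relative to `b`). -/
def dLt (b c : E → ℤ) : ℕ := ∑ x : E, (c x - b x).toNat

/-- One-sided deviation `d₁^>(b,c) = Σ_e max(0, b e − c e)` (the nullity of `c`
relative to `b`). -/
def dGt (b c : E → ℤ) : ℕ := ∑ x : E, (b x - c x).toNat

/-- `e` is internally active for the basis `b` with respect to the strict order `lt`:
`b − 1_e + 1_f` is not a basis for any `f` with `lt f e`. -/
def IntActive (P : Set (E → ℤ)) (lt : E → E → Prop) (b : E → ℤ) (e : E) : Prop :=
  ∀ f, lt f e →
    (fun x => b x - (if x = e then 1 else 0) + (if x = f then 1 else 0)) ∉ P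

/-- `e` is externally active for the basis `b` with respect to the strict order `lt`:
`b + 1_e − 1_f` is not a basis for any `f` with `lt f e`. -/
def ExtActive (P : Set (E → ℤ)) (lt : E → E → Prop) (b : E → ℤ) (e : E) : Prop :=
  ∀ f, lt f e →
    (fun x => b x + (if x = e then 1 else 0) - (if x = f then 1 else 0)) ∉ P

/-- The Crapo interval of the basis `b` with respect to the strict order `lt`. -/
def CrapoInterval (P : Set (E → ℤ)) (lt : E → E → Prop) (b : E → ℤ) : Set (E → ℤ) :=
  {y | ∀ e : E, (b e < y e → ExtActive P lt b e) ∧ (y e < b e → IntActive P lt b e)}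

/-- The number of only-internally-active elements of `b`. -/
noncomputable def oi (P : Set (E → ℤ)) (lt : E → E → Prop) (b : E → ℤ) : ℕ :=
  Set.ncard {e : E | IntActive P lt b e ∧ ¬ ExtActive P lt b e}

/-- The number of only-externally-active elements of `b`. -/
noncomputable def oe (P : Set (E → ℤ)) (lt : E → E → Prop) (b : E → ℤ) : ℕ :=
  Set.ncard {e : E | ExtActive P lt b e ∧ ¬ IntActive P lt b e}

/-- The number of elements of `b` that are both internally and externally active. -/
noncomputable def ie (P : Set (E → ℤ)) (lt : E → E → Prop) (b : E → ℤ) : ℕ :=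
  Set.ncard {e : E | IntActive P lt b e ∧ ExtActive P lt b e}

/-- The formal power series `1/(1−u) = Σ_{i≥0} uⁱ` in the first variable. -/
noncomputable def genU : MvPowerSeries (Fin 2) ℤ :=
  MvPowerSeries.invOfUnit (1 - MvPowerSeries.X (0 : Fin 2) : MvPowerSeries (Fin 2) ℤ) 1

/-- The formal power series `1/(1−v) = Σ_{i≥0} vⁱ` in the second variable. -/
noncomputable def genV : MvPowerSeries (Fin 2) ℤ :=
  MvPowerSeries.invOfUnit (1 - MvPowerSeries.X (1 : Fin 2) : MvPowerSeries (Fin 2) ℤ) 1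

/-- The activity polynomial `T_P(x,y) = Σ_{b∈P} x^{oi(b)} y^{oe(b)} (x+y−1)^{ie(b)}`
of the polymatroid `P` w.r.t. the order `lt`, evaluated at `x = 1/(1−u)`,
`y = 1/(1−v)`, as a formal power series in `u, v`. -/
noncomputable def TPoly (P : Set (E → ℤ)) (hPf : P.Finite) (lt : E → E → Prop) :
    MvPowerSeries (Fin 2) ℤ :=
  ∑ b ∈ hPf.toFinset,
    genU ^ oi P lt b * genV ^ oe P lt b * (genU + genV - 1) ^ ie P lt b

section AuxComb

variable {E : Type*} [Fintype E] [DecidableEq E]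

lemma sum_split_two (g : E → ℕ) {e f : E} (hef : e ≠ f) :
    ∑ x : E, g x = g e + g f + ∑ x ∈ (Finset.univ.erase e).erase f, g x := by
  rw [← Finset.add_sum_erase _ g (Finset.mem_univ e),
    ← Finset.add_sum_erase _ g (Finset.mem_erase.2 ⟨Ne.symm hef, Finset.mem_univ f⟩)]
  ring

lemma sum_le_sum_two {F G : E → ℕ} {e f : E} (hef : e ≠ f)
    (hrest : ∀ x, x ≠ e → x ≠ f → F x = G x) (h : F e + F f ≤ G e + G f) :
    ∑ x : E, F x ≤ ∑ x : E, G x := by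
  have hr : ∑ x ∈ (Finset.univ.erase e).erase f, F x
      = ∑ x ∈ (Finset.univ.erase e).erase f, G x :=
    Finset.sum_congr rfl (fun x hx => by
      simp only [Finset.mem_erase] at hx; exact hrest x hx.2.1 hx.1)
  rw [sum_split_two F hef, sum_split_two G hef, hr]
  omega

lemma sum_lt_sum_two {F G : E → ℕ} {e f : E} (hef : e ≠ f)
    (hrest : ∀ x, x ≠ e → x ≠ f → F x = G x) (h : F e + F f < G e + G f) :
    ∑ x : E, F x < ∑ x : E, G x := by
  have hr : ∑ x ∈ (Finset.univ.erase e).erase f, F x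
      = ∑ x ∈ (Finset.univ.erase e).erase f, G x :=
    Finset.sum_congr rfl (fun x hx => by
      simp only [Finset.mem_erase] at hx; exact hrest x hx.2.1 hx.1)
  rw [sum_split_two F hef, sum_split_two G hef, hr]
  omega

lemma exists_lt_min {lt : E → E → Prop} (hlt : IsStrictTotalOrder E lt)
    (s : Finset E) (hs : s.Nonempty) : ∃ e ∈ s, ∀ f ∈ s, f ≠ e → lt e f := by
  classical
  induction hs using Finset.Nonempty.cons_induction with
  | singleton a => exact ⟨a, by simp, by simp +contextual⟩
  | cons a s ha hs ih =>
    obtain ⟨m, hm, hmin⟩ := ih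
    rcases (by haveI := hlt; exact trichotomous_of lt a m : lt a m ∨ a = m ∨ lt m a) with h | h | h
    · refine ⟨a, Finset.mem_cons_self a s, ?_⟩
      intro f hf hfa
      rcases Finset.mem_cons.1 hf with rfl | hfs
      · exact absurd rfl hfa
      · by_cases hfm : f = m
        · exact hfm ▸ h
        · exact hlt.trans _ _ _ h (hmin f hfs hfm)
    · exact absurd (h ▸ hm) ha
    · refine ⟨m, Finset.mem_cons_of_mem hm, ?_⟩
      intro f hf hfm
      rcases Finset.mem_cons.1 hf with rfl | hfs
      · exact h
      · exact hmin f hfs hfm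

lemma d1_eq_zero {b c : E → ℤ} (h : d1 b c = 0) : b = c := by
  funext x
  have := (Finset.sum_eq_zero_iff.1 h) x (Finset.mem_univ x)
  omega

/-- The key exchange step: if `c` is in the Crapo interval of `b` and `b' ∈ P` differs
from `b`, we can move `b'` one step closer to `b` without increasing either deviation. -/
lemma exchange_step {P : Set (E → ℤ)} (hP : IsPolymatroid P) {lt : E → E → Prop}
    (hlt : IsStrictTotalOrder E lt) {b c b' : E → ℤ} (hb : b ∈ P)
    (hc : c ∈ CrapoInterval P lt b) (hb' : b' ∈ P) (hne : b' ≠ b) :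
    ∃ b'' ∈ P, d1 b'' b < d1 b' b ∧ dGt b'' c ≤ dGt b' c ∧ dLt b'' c ≤ dLt b' c := by
  classical
  set s : Finset E := Finset.univ.filter (fun x => b' x ≠ b x) with hs
  have hsne : s.Nonempty := by
    by_contra h
    rw [Finset.not_nonempty_iff_eq_empty, Finset.eq_empty_iff_forall_notMem] at h
    exact hne (funext fun x => by
      have := h x; simp only [hs, Finset.mem_filter, Finset.mem_univ, true_and] at this
      exact not_not.1 this)
  obtain ⟨e, he, hemin⟩ := exists_lt_min hlt s hsne
  have hde : b' e ≠ b e := by simpa [hs] using he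
  rcases hde.lt_or_gt with h1t | h1t
  · -- b' e < b e : apply exchange to (b', b) at e
    obtain ⟨f, hf, hm1, hm2⟩ := hP.2.2 b' hb' b hb e h1t
    -- hf : b f < b' f
    have hef : e ≠ f := fun h => by rw [h] at h1t; omega
    have hltef : lt e f := hemin f (by simp [hs]; omega) (Ne.symm hef)
    have hcf : c f < b' f := by
      by_contra hcon
      push_neg at hcon
      have hbf : b f < c f := lt_of_lt_of_le hf hcon
      refine (hc f).1 hbf e hltef ?_
      have heq : (fun x => b x + (if x = f then (1:ℤ) else 0) - (if x = e then 1 else 0))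
          = (fun x => b x - (if x = e then 1 else 0) + (if x = f then 1 else 0)) := by
        funext x; ring
      rw [heq]; exact hm2
    refine ⟨_, hm1, ?_, ?_, ?_⟩
    · refine sum_lt_sum_two hef (fun x hx1 hx2 => by simp [hx1, hx2]) ?_
      simp only [hef, Ne.symm hef, if_true, if_false, ite_true, ite_false]
      simp [hef, Ne.symm hef]
      omega
    · refine sum_le_sum_two hef (fun x hx1 hx2 => by simp [hx1, hx2]) ?_
      simp only [hef, Ne.symm hef, if_true, if_false, ite_true, ite_false]
      simp [hef, Ne.symm hef]
      omega
    · refine sum_le_sum_two hef (fun x hx1 hx2 => by simp [hx1, hx2]) ?_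
      simp only [hef, Ne.symm hef, if_true, if_false, ite_true, ite_false]
      simp [hef, Ne.symm hef]
      omega
  · -- b e < b' e : apply exchange to (b, b') at e
    obtain ⟨f, hf, hm1, hm2⟩ := hP.2.2 b hb b' hb' e h1t
    -- hf : b' f < b f, hm1 : b + 1_e - 1_f ∈ P, hm2 : b' - 1_e + 1_f ∈ P
    have hef : e ≠ f := fun h => by rw [h] at h1t; omega
    have hltef : lt e f := hemin f (by simp [hs]; omega) (Ne.symm hef)
    have hcf : b' f < c f := by
      by_contra hcon
      push_neg at hcon
      have hbf : c f < b f := lt_of_le_of_lt hcon hf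
      refine (hc f).2 hbf e hltef ?_
      have heq : (fun x => b x - (if x = f then (1:ℤ) else 0) + (if x = e then 1 else 0))
          = (fun x => b x + (if x = e then (1:ℤ) else 0) - (if x = f then 1 else 0)) := by
        funext x; ring
      rw [heq]; exact hm1
    refine ⟨_, hm2, ?_, ?_, ?_⟩
    · refine sum_lt_sum_two hef (fun x hx1 hx2 => by simp [hx1, hx2]) ?_
      simp only [hef, Ne.symm hef, if_true, if_false, ite_true, ite_false]
      simp [hef, Ne.symm hef]
      omega
    · refine sum_le_sum_two hef (fun x hx1 hx2 => by simp [hx1, hx2]) ?_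
      simp only [hef, Ne.symm hef, if_true, if_false, ite_true, ite_false]
      simp [hef, Ne.symm hef]
      omega
    · refine sum_le_sum_two hef (fun x hx1 hx2 => by simp [hx1, hx2]) ?_
      simp only [hef, Ne.symm hef, if_true, if_false, ite_true, ite_false]
      simp [hef, Ne.symm hef]
      omega

/-- A basis whose Crapo interval contains `c` minimizes both one-sided deviations. -/
lemma interval_min {P : Set (E → ℤ)} (hP : IsPolymatroid P) {lt : E → E → Prop}
    (hlt : IsStrictTotalOrder E lt) {b c : E → ℤ} (hb : b ∈ P)
    (hc : c ∈ CrapoInterval P lt b) :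
    ∀ b' ∈ P, dGt b c ≤ dGt b' c ∧ dLt b c ≤ dLt b' c := by
  have key : ∀ n : ℕ, ∀ b' ∈ P, d1 b' b ≤ n → dGt b c ≤ dGt b' c ∧ dLt b c ≤ dLt b' c := by
    intro n
    induction n with
    | zero =>
      intro b' hb' hd
      rw [d1_eq_zero (Nat.le_zero.1 hd)]
      exact ⟨le_rfl, le_rfl⟩
    | succ n ih =>
      intro b' hb' hd
      by_cases hbe : b' = b
      · rw [hbe]; exact ⟨le_rfl, le_rfl⟩
      · obtain ⟨b'', hb'', hd2, hg, hl⟩ := exchange_step hP hlt hb hc hb' hbe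
        have := ih b'' hb'' (by omega)
        exact ⟨this.1.trans hg, this.2.trans hl⟩
  exact fun b' hb' => key (d1 b' b) b' hb' le_rfl

lemma unique_aux {P : Set (E → ℤ)} (hP : IsPolymatroid P) {lt : E → E → Prop}
    {b b' c : E → ℤ} {e : E} (hb : b ∈ P) (hb' : b' ∈ P)
    (hc : c ∈ CrapoInterval P lt b) (hc' : c ∈ CrapoInterval P lt b')
    (hemin : ∀ f, b f ≠ b' f → f ≠ e → lt e f) (h : b e < b' e) : False := by
  obtain ⟨f, hf, hm1, hm2⟩ := hP.2.2 b hb b' hb' e h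
  have hef : e ≠ f := fun hh => by rw [hh] at h; omega
  have hltef : lt e f := hemin f (by omega) (Ne.symm hef)
  rcases lt_or_ge (c f) (b f) with hcf | hcf
  · refine (hc f).2 hcf e hltef ?_
    have heq : (fun x => b x - (if x = f then (1:ℤ) else 0) + (if x = e then 1 else 0))
        = (fun x => b x + (if x = e then (1:ℤ) else 0) - (if x = f then 1 else 0)) := by
      funext x; ring
    rw [heq]; exact hm1
  · have hbf : b' f < c f := lt_of_lt_of_le hf hcf
    refine (hc' f).1 hbf e hltef ?_
    have heq : (fun x => b' x + (if x = f then (1:ℤ) else 0) - (if x = e then 1 else 0))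
        = (fun x => b' x - (if x = e then (1:ℤ) else 0) + (if x = f then 1 else 0)) := by
      funext x; ring
    rw [heq]; exact hm2

/-- Crapo intervals of distinct bases are disjoint. -/
lemma interval_unique {P : Set (E → ℤ)} (hP : IsPolymatroid P) {lt : E → E → Prop}
    (hlt : IsStrictTotalOrder E lt) {b b' c : E → ℤ} (hb : b ∈ P) (hb' : b' ∈ P)
    (hc : c ∈ CrapoInterval P lt b) (hc' : c ∈ CrapoInterval P lt b') : b = b' := by
  classical
  by_contra hne
  set s : Finset E := Finset.univ.filter (fun x => b x ≠ b' x) with hs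
  have hsne : s.Nonempty := by
    by_contra h
    rw [Finset.not_nonempty_iff_eq_empty, Finset.eq_empty_iff_forall_notMem] at h
    exact hne (funext fun x => by
      have := h x; simp only [hs, Finset.mem_filter, Finset.mem_univ, true_and] at this
      exact not_not.1 this)
  obtain ⟨e, he, hemin⟩ := exists_lt_min hlt s hsne
  have hde : b e ≠ b' e := by simpa [hs] using he
  have hemin' : ∀ f, b f ≠ b' f → f ≠ e → lt e f := fun f h1 h2 =>
    hemin f (by simp [hs, h1]) h2
  rcases hde.lt_or_gt with h1t | h1t
  · exact unique_aux hP hb hb' hc hc' hemin' h1t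
  · exact unique_aux hP hb' hb hc' hc (fun f h1 h2 => hemin' f (Ne.symm h1) h2) h1t

lemma pot_lt {we wf A A' B B' : ℕ} (hA : A' + 1 = A) (hB : B' ≤ B + 1) (hw : wf < we) :
    we * A' + wf * B' < we * A + wf * B := by
  subst hA
  have h1 : wf * B' ≤ wf * B + wf := by
    have := Nat.mul_le_mul_left wf hB
    rwa [Nat.mul_add, Nat.mul_one] at this
  have h2 : we * (A' + 1) = we * A' + we := by ring
  rw [h2]
  omega

/-- Every lattice point lies in some Crapo interval. -/
lemma interval_exists {P : Set (E → ℤ)} (hP : IsPolymatroid P) {lt : E → E → Prop}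
    (hlt : IsStrictTotalOrder E lt) (c : E → ℤ) : ∃ b ∈ P, c ∈ CrapoInterval P lt b := by
  classical
  set w : E → ℕ := fun e => (Finset.univ.filter (fun y => lt y e)).card + 1 with hw
  have hwlt : ∀ {f e}, lt f e → w f < w e := by
    intro f e h
    have hss : Finset.univ.filter (fun y => lt y f) ⊂ Finset.univ.filter (fun y => lt y e) := by
      refine Finset.ssubset_iff_of_subset (fun y hy => ?_) |>.2 ?_
      · simp only [Finset.mem_filter, Finset.mem_univ, true_and] at hy ⊢
        exact hlt.trans _ _ _ hy h
      · refine ⟨f, by simp [h], by simp [hlt.irrefl f]⟩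
    have := Finset.card_lt_card hss
    simp only [hw]; omega
  obtain ⟨b, hbm, hmin⟩ := Finset.exists_min_image hP.2.1.toFinset
    (fun b => ∑ x : E, w x * (b x - c x).natAbs) (by
      obtain ⟨b0, hb0⟩ := hP.1
      exact ⟨b0, hP.2.1.mem_toFinset.2 hb0⟩)
  have hb : b ∈ P := hP.2.1.mem_toFinset.1 hbm
  refine ⟨b, hb, fun e => ⟨?_, ?_⟩⟩
  · intro hbe f hfe hmem
    have hef : e ≠ f := fun h => hlt.irrefl e (h ▸ hfe)
    have hcmp := hmin _ (hP.2.1.mem_toFinset.2 hmem)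
    apply absurd hcmp
    simp only [not_le]
    refine sum_lt_sum_two hef (fun x hx1 hx2 => by simp [hx1, hx2]) ?_
    simp only [hef, Ne.symm hef, if_true, if_false, ite_true, ite_false]
    exact pot_lt (by omega) (by omega) (hwlt hfe)
  · intro hbe f hfe hmem
    have hef : e ≠ f := fun h => hlt.irrefl e (h ▸ hfe)
    have hcmp := hmin _ (hP.2.1.mem_toFinset.2 hmem)
    apply absurd hcmp
    simp only [not_le]
    refine sum_lt_sum_two hef (fun x hx1 hx2 => by simp [hx1, hx2]) ?_
    simp only [hef, Ne.symm hef, if_true, if_false, ite_true, ite_false]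
    exact pot_lt (by omega) (by omega) (hwlt hfe)

end AuxComb
section AuxSeries

open MvPowerSeries

lemma fin2_eq_zero_iff (d : Fin 2 →₀ ℕ) : d = 0 ↔ d 0 = 0 ∧ d 1 = 0 := by
  constructor
  · rintro rfl; simp
  · rintro ⟨h0, h1⟩
    ext i
    fin_cases i
    · exact h0
    · exact h1

lemma fin2_decomp (d : Fin 2 →₀ ℕ) : d = Finsupp.single 0 (d 0) + Finsupp.single 1 (d 1) := by
  ext i
  fin_cases i
  · simp [Finsupp.single_apply]
  · simp [Finsupp.single_apply]

/-- The explicit geometric series `Σ_i u^i`. -/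
noncomputable def geom (k : Fin 2) : MvPowerSeries (Fin 2) ℤ :=
  fun d => if d (1 - k) = 0 then 1 else 0

lemma coeff_geom (k : Fin 2) (d : Fin 2 →₀ ℕ) :
    coeff d (geom k) = if d (1 - k) = 0 then 1 else 0 := rfl

lemma one_sub_X_mul_geom (k : Fin 2) :
    (1 - X k : MvPowerSeries (Fin 2) ℤ) * geom k = 1 := by
  have hX : (X k : MvPowerSeries (Fin 2) ℤ) = monomial (Finsupp.single k 1) 1 := rfl
  ext d
  rw [sub_mul, one_mul, map_sub, hX, coeff_monomial_mul, coeff_one]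
  have hkk : k ≠ 1 - k := by fin_cases k <;> decide
  have hd : ((d - Finsupp.single k 1 : Fin 2 →₀ ℕ)) (1 - k) = d (1 - k) := by
    rw [Finsupp.tsub_apply, Finsupp.single_eq_of_ne (Ne.symm hkk)]
    simp
  rw [coeff_geom, coeff_geom, hd]
  have hall : ∀ i : Fin 2, i = k ∨ i = 1 - k := by fin_cases k <;> decide
  have hC : d = 0 ↔ (d k = 0 ∧ d (1 - k) = 0) := by
    constructor
    · rintro rfl; simp
    · rintro ⟨h1, h2⟩
      ext i
      rcases hall i with rfl | rfl
      · simpa using h1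
      · simpa using h2
  simp only [Finsupp.single_le_iff, hC, one_mul]
  split_ifs <;> omega

lemma geom_eq_invOfUnit (k : Fin 2) :
    geom k = MvPowerSeries.invOfUnit (1 - X k : MvPowerSeries (Fin 2) ℤ) 1 := by
  have hc : constantCoeff (1 - X k) = ((1 : ℤˣ) : ℤ) := by
    simp [map_sub, constantCoeff_X]
  have h1 : (1 - X k : MvPowerSeries (Fin 2) ℤ) *
      MvPowerSeries.invOfUnit (1 - X k : MvPowerSeries (Fin 2) ℤ) 1 = 1 :=
    MvPowerSeries.mul_invOfUnit _ _ hc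
  calc geom k = geom k * ((1 - X k) * MvPowerSeries.invOfUnit (1 - X k) 1) := by
        rw [h1, mul_one]
    _ = ((1 - X k) * geom k) * MvPowerSeries.invOfUnit (1 - X k) 1 := by ring
    _ = MvPowerSeries.invOfUnit (1 - X k) 1 := by rw [one_sub_X_mul_geom, one_mul]

lemma coeff_genU (d : Fin 2 →₀ ℕ) :
    coeff d genU = if d 1 = 0 then 1 else 0 := by
  rw [genU, ← geom_eq_invOfUnit 0]
  rfl

lemma coeff_genV (d : Fin 2 →₀ ℕ) :
    coeff d genV = if d 0 = 0 then 1 else 0 := by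
  rw [genV, ← geom_eq_invOfUnit 1]
  rfl

lemma coeff_W (d : Fin 2 →₀ ℕ) :
    coeff d (genU + genV - 1) = if d 0 = 0 ∨ d 1 = 0 then 1 else 0 := by
  rw [map_sub, map_add, coeff_genU, coeff_genV, coeff_one]
  simp only [fin2_eq_zero_iff]
  split_ifs <;> omega

end AuxSeries
section AuxCount

open MvPowerSeries

variable {E : Type*} [Fintype E] [DecidableEq E]

lemma ncard_filter (p : E → Prop) [DecidablePred p] :
    {e : E | p e}.ncard = (Finset.univ.filter p).card := by
  rw [← Set.ncard_coe_finset]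
  congr 1
  ext e
  simp

/-- The per-element generating series of the Crapo interval. -/
noncomputable def gser (P : Set (E → ℤ)) (lt : E → E → Prop) (b : E → ℤ) (e : E) :
    MvPowerSeries (Fin 2) ℤ :=
  open Classical in
  if IntActive P lt b e then (if ExtActive P lt b e then genU + genV - 1 else genU)
  else (if ExtActive P lt b e then genV else 1)

/-- The admissibility condition for the exponent pair at an element. -/
def Qp (P : Set (E → ℤ)) (lt : E → E → Prop) (b : E → ℤ) (e : E) (m : Fin 2 →₀ ℕ) : Prop :=
  (m 0 = 0 ∨ m 1 = 0) ∧ (m 0 ≠ 0 → IntActive P lt b e) ∧ (m 1 ≠ 0 → ExtActive P lt b e)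

lemma fin2_cases (k : Fin 2) : k = 0 ∨ k = 1 := by
  fin_cases k
  · exact Or.inl rfl
  · exact Or.inr rfl

open Classical in
lemma coeff_gser (P : Set (E → ℤ)) (lt : E → E → Prop) (b : E → ℤ) (e : E)
    (m : Fin 2 →₀ ℕ) :
    coeff m (gser P lt b e) = if Qp P lt b e m then 1 else 0 := by
  classical
  unfold gser Qp
  by_cases hI : IntActive P lt b e <;> by_cases hX : ExtActive P lt b e <;>
    simp only [hI, hX, if_true, if_false, ite_true, ite_false, coeff_W, coeff_genU,
      coeff_genV, coeff_one, fin2_eq_zero_iff, not_true, not_false_iff, ne_eq,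
      imp_false, not_not, true_and, and_true, imp_true_iff] <;>
    split_ifs <;> omega

lemma prod_gser (P : Set (E → ℤ)) (lt : E → E → Prop) (b : E → ℤ) :
    (∏ e : E, gser P lt b e)
      = genU ^ oi P lt b * genV ^ oe P lt b * (genU + genV - 1) ^ ie P lt b := by
  classical
  rw [← Finset.prod_filter_mul_prod_filter_not Finset.univ (fun e => IntActive P lt b e)
      (gser P lt b),
    ← Finset.prod_filter_mul_prod_filter_not
      (Finset.univ.filter (fun e => IntActive P lt b e)) (fun e => ExtActive P lt b e)
      (gser P lt b),
    ← Finset.prod_filter_mul_prod_filter_not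
      (Finset.univ.filter (fun e => ¬ IntActive P lt b e)) (fun e => ExtActive P lt b e)
      (gser P lt b)]
  rw [Finset.filter_filter, Finset.filter_filter, Finset.filter_filter, Finset.filter_filter]
  have e1 : ∏ e ∈ Finset.univ.filter (fun e => IntActive P lt b e ∧ ExtActive P lt b e),
      gser P lt b e = (genU + genV - 1) ^ ie P lt b := by
    have hcst : ∀ e ∈ Finset.univ.filter
        (fun e => IntActive P lt b e ∧ ExtActive P lt b e),
        gser P lt b e = genU + genV - 1 := by
      intro e he
      simp only [Finset.mem_filter] at he
      simp [gser, he.2.1, he.2.2]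
    rw [Finset.prod_congr rfl hcst, Finset.prod_const, ie, ncard_filter]
  have e2 : ∏ e ∈ Finset.univ.filter (fun e => IntActive P lt b e ∧ ¬ ExtActive P lt b e),
      gser P lt b e = genU ^ oi P lt b := by
    have hcst : ∀ e ∈ Finset.univ.filter
        (fun e => IntActive P lt b e ∧ ¬ ExtActive P lt b e),
        gser P lt b e = genU := by
      intro e he
      simp only [Finset.mem_filter] at he
      simp [gser, he.2.1, he.2.2]
    rw [Finset.prod_congr rfl hcst, Finset.prod_const, oi, ncard_filter]
  have e3 : ∏ e ∈ Finset.univ.filter (fun e => ¬ IntActive P lt b e ∧ ExtActive P lt b e),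
      gser P lt b e = genV ^ oe P lt b := by
    have hcst : ∀ e ∈ Finset.univ.filter
        (fun e => ¬ IntActive P lt b e ∧ ExtActive P lt b e),
        gser P lt b e = genV := by
      intro e he
      simp only [Finset.mem_filter] at he
      simp [gser, he.2.1, he.2.2]
    rw [Finset.prod_congr rfl hcst, Finset.prod_const, oe, ncard_filter]
    congr 2
    ext e
    simp [and_comm]
  have e4 : ∏ e ∈ Finset.univ.filter (fun e => ¬ IntActive P lt b e ∧ ¬ ExtActive P lt b e),
      gser P lt b e = 1 := by
    refine Finset.prod_eq_one (fun e he => ?_)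
    simp only [Finset.mem_filter] at he
    simp [gser, he.2.1, he.2.2]
  rw [e1, e2, e3, e4]
  ring

/-- The Crapo interval with prescribed deviations, as a finset, counted by the
product generating series. -/
lemma interval_card (P : Set (E → ℤ)) (lt : E → E → Prop) (b : E → ℤ) (i j : ℕ) :
    ∃ T : Finset (E → ℤ),
      {c : E → ℤ | c ∈ CrapoInterval P lt b ∧ dGt b c = i ∧ dLt b c = j} = ↑T ∧
      (T.card : ℤ) = coeff (Finsupp.single 0 i + Finsupp.single 1 j)
        (∏ e : E, gser P lt b e) := by
  classical
  set d : Fin 2 →₀ ℕ := Finsupp.single 0 i + Finsupp.single 1 j with hdd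
  have hd0 : d 0 = i := by simp [hdd, Finsupp.single_apply]
  have hd1 : d 1 = j := by simp [hdd, Finsupp.single_apply]
  set A : Finset (E →₀ (Fin 2 →₀ ℕ)) :=
    (Finset.finsuppAntidiag (Finset.univ : Finset E) d).filter
      (fun l => ∀ e, Qp P lt b e (l e)) with hA
  set F : (E →₀ (Fin 2 →₀ ℕ)) → (E → ℤ) :=
    (fun l => fun x => b x - (l x 0 : ℤ) + (l x 1 : ℤ)) with hF
  refine ⟨A.image F, ?_, ?_⟩
  · ext c
    simp only [Set.mem_setOf_eq, Finset.coe_image, Set.mem_image, Finset.mem_coe]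
    constructor
    · rintro ⟨hc, hgi, hgj⟩
      set l : E →₀ (Fin 2 →₀ ℕ) := Finsupp.equivFunOnFinite.symm
        (fun x => Finsupp.single 0 (b x - c x).toNat + Finsupp.single 1 (c x - b x).toNat)
        with hl
      have hl0 : ∀ x, l x 0 = (b x - c x).toNat := fun x => by
        simp [hl, Finsupp.single_apply]
      have hl1 : ∀ x, l x 1 = (c x - b x).toNat := fun x => by
        simp [hl, Finsupp.single_apply]
      refine ⟨l, ?_, ?_⟩
      · rw [hA, Finset.mem_filter]
        constructor
        · rw [Finset.mem_finsuppAntidiag]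
          refine ⟨?_, Finset.subset_univ _⟩
          ext k
          rw [Finsupp.finset_sum_apply]
          rcases fin2_cases k with rfl | rfl
          · simpa [hl0, hd0, dGt] using hgi
          · simpa [hl1, hd1, dLt] using hgj
        · intro e
          refine ⟨by rw [hl0, hl1]; omega, ?_, ?_⟩
          · intro h0
            rw [hl0] at h0
            exact (hc e).2 (by omega)
          · intro h1
            rw [hl1] at h1
            exact (hc e).1 (by omega)
      · funext x
        simp only [hF, hl0, hl1]
        omega
    · rintro ⟨l, hlA, rfl⟩
      rw [hA, Finset.mem_filter, Finset.mem_finsuppAntidiag] at hlA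
      obtain ⟨⟨hsum, -⟩, hQ⟩ := hlA
      have hsum0 : ∑ x : E, l x 0 = i := by
        rw [← hd0, ← hsum, Finsupp.finset_sum_apply]
      have hsum1 : ∑ x : E, l x 1 = j := by
        rw [← hd1, ← hsum, Finsupp.finset_sum_apply]
      refine ⟨fun e => ⟨?_, ?_⟩, ?_, ?_⟩
      · intro h
        simp only [hF] at h
        exact (hQ e).2.2 (by omega)
      · intro h
        simp only [hF] at h
        exact (hQ e).2.1 (by omega)
      · rw [← hsum0]
        refine Finset.sum_congr rfl (fun x _ => ?_)
        have := (hQ x).1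
        simp only [hF]
        omega
      · rw [← hsum1]
        refine Finset.sum_congr rfl (fun x _ => ?_)
        have := (hQ x).1
        simp only [hF]
        omega
  · rw [Finset.card_image_of_injOn, MvPowerSeries.coeff_prod]
    · have hcongr : ∀ l ∈ Finset.finsuppAntidiag (Finset.univ : Finset E) d,
          (∏ e : E, coeff (l e) (gser P lt b e))
            = if ∀ e, Qp P lt b e (l e) then (1 : ℤ) else 0 := by
        intro l _
        rw [Finset.prod_congr rfl (fun e _ => coeff_gser P lt b e (l e))]
        simp only [Finset.prod_ite_zero]
        simp
      rw [Finset.sum_congr rfl hcongr, Finset.sum_boole, hA]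
    · intro l hl l' hl' hFe
      rw [Finset.coe_filter] at hl hl'
      simp only [Set.mem_setOf_eq, Finset.mem_finsuppAntidiag] at hl hl'
      ext x k
      have hx := congrFun hFe x
      simp only [hF] at hx
      have h1 := (hl.2 x).1
      have h2 := (hl'.2 x).1
      have e0 : l x 0 = l' x 0 := by omega
      have e1 : l x 1 = l' x 1 := by omega
      rcases fin2_cases k with rfl | rfl
      · exact e0
      · exact e1

end AuxCount
section MainAux

open MvPowerSeries

variable {E : Type*} [Fintype E] [DecidableEq E]

lemma main_count {P : Set (E → ℤ)} (hP : IsPolymatroid P) (lt : E → E → Prop)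
    (hlt : IsStrictTotalOrder E lt) (i j : ℕ) :
    ({c : E → ℤ |
        sInf {n : ℕ | ∃ b ∈ P, dGt b c = n} = i ∧
        sInf {n : ℕ | ∃ b ∈ P, dLt b c = n} = j}.ncard : ℤ) =
      MvPowerSeries.coeff (Finsupp.single 0 i + Finsupp.single 1 j)
        (TPoly P hP.2.1 lt) := by
  classical
  choose T hT hTc using fun b : E → ℤ => interval_card P lt b i j
  have hinf : ∀ b ∈ P, ∀ c ∈ CrapoInterval P lt b,
      sInf {n : ℕ | ∃ b' ∈ P, dGt b' c = n} = dGt b c ∧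
      sInf {n : ℕ | ∃ b' ∈ P, dLt b' c = n} = dLt b c := by
    intro b hb c hc
    have hmin := interval_min hP hlt hb hc
    constructor
    · refine le_antisymm (Nat.sInf_le ⟨b, hb, rfl⟩) ?_
      refine le_csInf ⟨dGt b c, b, hb, rfl⟩ ?_
      rintro n ⟨b', hb', rfl⟩
      exact (hmin b' hb').1
    · refine le_antisymm (Nat.sInf_le ⟨b, hb, rfl⟩) ?_
      refine le_csInf ⟨dLt b c, b, hb, rfl⟩ ?_
      rintro n ⟨b', hb', rfl⟩
      exact (hmin b' hb').2
  have hset : {c : E → ℤ |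
        sInf {n : ℕ | ∃ b ∈ P, dGt b c = n} = i ∧
        sInf {n : ℕ | ∃ b ∈ P, dLt b c = n} = j}
      = ↑(hP.2.1.toFinset.biUnion T) := by
    ext c
    simp only [Set.mem_setOf_eq, Finset.coe_biUnion, Set.mem_iUnion, Finset.mem_coe,
      Set.Finite.mem_toFinset]
    constructor
    · rintro ⟨hi, hj⟩
      obtain ⟨b, hb, hcb⟩ := interval_exists hP hlt c
      obtain ⟨h1, h2⟩ := hinf b hb c hcb
      refine ⟨b, hb, ?_⟩
      have hmem : c ∈ {c : E → ℤ | c ∈ CrapoInterval P lt b ∧ dGt b c = i ∧ dLt b c = j} :=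
        ⟨hcb, by rw [← h1, hi], by rw [← h2, hj]⟩
      rwa [hT b] at hmem
    · rintro ⟨b, hb, hcT⟩
      have hmem : c ∈ {c : E → ℤ | c ∈ CrapoInterval P lt b ∧ dGt b c = i ∧ dLt b c = j} := by
        rw [hT b]; exact hcT
      obtain ⟨hcb, hdg, hdl⟩ := hmem
      obtain ⟨h1, h2⟩ := hinf b hb c hcb
      exact ⟨by rw [h1, hdg], by rw [h2, hdl]⟩
  rw [hset, Set.ncard_coe_finset]
  have hdisj : ∀ b ∈ hP.2.1.toFinset, ∀ b' ∈ hP.2.1.toFinset, b ≠ b' →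
      Disjoint (T b) (T b') := by
    intro b hb b' hb' hne
    rw [Finset.disjoint_left]
    intro c hcb hcb'
    have h1 : c ∈ {c : E → ℤ | c ∈ CrapoInterval P lt b ∧ dGt b c = i ∧ dLt b c = j} := by
      rw [hT b]; exact hcb
    have h2 : c ∈ {c : E → ℤ | c ∈ CrapoInterval P lt b' ∧ dGt b' c = i ∧ dLt b' c = j} := by
      rw [hT b']; exact hcb'
    exact hne (interval_unique hP hlt (hP.2.1.mem_toFinset.1 hb) (hP.2.1.mem_toFinset.1 hb')
      h1.1 h2.1)
  rw [Finset.card_biUnion hdisj, TPoly, map_sum, Nat.cast_sum]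
  refine Finset.sum_congr rfl (fun b _ => ?_)
  rw [hTc b, prod_gser]

end MainAux
/-- The corank-nullity generating function
`T̃_P(u,v) = Σ_{c∈ℤ^E} u^{d₁^>(P,c)} v^{d₁^<(P,c)}` equals
`T_P(1/(1−u), 1/(1−v))` as formal power series (expressed coefficientwise);
in particular `T_P(x,y)` does not depend on the chosen order. -/
theorem corank_nullity_eq_activity (P : Set (E → ℤ)) (hP : IsPolymatroid P)
    (lt : E → E → Prop) (hlt : IsStrictTotalOrder E lt) :
    (∀ i j : ℕ,
      ({c : E → ℤ |
          sInf {n : ℕ | ∃ b ∈ P, dGt b c = n} = i ∧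
          sInf {n : ℕ | ∃ b ∈ P, dLt b c = n} = j}.ncard : ℤ) =
        MvPowerSeries.coeff (Finsupp.single 0 i + Finsupp.single 1 j)
          (TPoly P hP.2.1 lt)) ∧
    (∀ lt' : E → E → Prop, IsStrictTotalOrder E lt' →
      TPoly P hP.2.1 lt = TPoly P hP.2.1 lt') := by
  refine ⟨fun i j => main_count hP lt hlt i j, fun lt' hlt' => ?_⟩
  apply MvPowerSeries.ext
  intro d
  obtain ⟨i, j, rfl⟩ : ∃ i j, d = Finsupp.single 0 i + Finsupp.single 1 j :=
    ⟨d 0, d 1, fin2_decomp d⟩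
  rw [← main_count hP lt hlt i j, main_count hP lt' hlt' i j]
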